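/- Let à := A ⊗_𝒪 𝒪Aut(P) with multiplication (a⊗φ)(b⊗ψ) := ab ⊗ ψ∘φ and with P acting by (a⊗φ)^u := u^{-1}·a·φ(u) ⊗ φ. Then the assignment a⊗φ ↦ a induces, for each φ ∈ Aut(P), a k-module isomorphism (A⊗φ)(P) ≅ A(Δ_φ(P)), and the direct sum of these maps is an isomorphism Ã(P) ≅ N̄_A^{Aut(P)}(P) of Aut(P)-graded k-algebras, where Ã(P) is the usual Brauer quotient of à with respect to this P-action. -/

import Mathlib

open scoped Classical DirectSum

/-- the quotient of a submodule `S` by the intersection `S ∩ T` with a further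
submodule `T`. -/
noncomputable abbrev subQuot {R M : Type*} [Ring R] [AddCommGroup M] [Module R M]
    (S T : Submodule R M) : Type _ := ↥S ⧸ T.comap S.subtype

section Common

variable (𝒪 : Type*) [CommRing 𝒪]
variable {A : Type*} [Ring A] [Algebra 𝒪 A]
variable {P : Type*} [Group P]

/-- `A^{Δ_φ(Q)}`: elements `a` with `u·a = a·φ(u)` for all `u ∈ Q`. -/
def intFixed (σ : P →* Aˣ) (φ : P ≃* P) (Q : Subgroup P) : Submodule 𝒪 A where
  carrier := {a | ∀ u ∈ Q, (σ u : A) * a = a * (σ (φ u) : A)}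
  add_mem' := by intro a b ha hb u hu; rw [mul_add, add_mul, ha u hu, hb u hu]
  zero_mem' := by intro u hu; rw [mul_zero, zero_mul]
  smul_mem' := by intro r a ha u hu
                  rw [mul_smul_comm, smul_mul_assoc, ha u hu]

/-- relative trace `Tr_{Δ_φ(Q)}^{Δ_φ(P)}(c) = Σ_u u⁻¹·c·φ(u)` over representatives of the
right cosets `Qu` of `Q` in `P`. -/
noncomputable def relTr [Finite P] (σ : P →* Aˣ) (φ : P ≃* P) (Q : Subgroup P) (c : A) : A :=
  ∑ᶠ x : Quotient (QuotientGroup.rightRel Q),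
    ((σ x.out)⁻¹ : Aˣ) * c * (σ (φ x.out) : A)

/-- `Σ_{Q < P} A^{Δ_φ(P)}_{Δ_φ(Q)}`. -/
noncomputable def trSum [Finite P] (σ : P →* Aˣ) (φ : P ≃* P) : Submodule 𝒪 A :=
  ⨆ Q : {Q : Subgroup P // Q < ⊤},
    Submodule.span 𝒪 (relTr σ φ Q '' (intFixed 𝒪 σ φ Q))

/-- `Σ_{Q<P} A^{Δ_φ(P)}_{Δ_φ(Q)} + 𝔭·A^{Δ_φ(P)}`. -/
noncomputable def brDen [Finite P] (𝔭 : Ideal 𝒪) (σ : P →* Aˣ) (φ : P ≃* P) : Submodule 𝒪 A :=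
  trSum 𝒪 σ φ ⊔ 𝔭 • intFixed 𝒪 σ φ ⊤

/-- The Brauer quotient `A(Δ_φ(P))`. -/
noncomputable abbrev BrQuot [Finite P] (𝔭 : Ideal 𝒪) (σ : P →* Aˣ) (φ : P ≃* P) :=
  ↥(intFixed 𝒪 σ φ ⊤) ⧸ ((brDen 𝒪 𝔭 σ φ).comap (intFixed 𝒪 σ φ ⊤).subtype)

/-- the `𝒪`-linear map `a ↦ u⁻¹·a·φ(u)` on `A`. -/
def conjMap (σ : P →* Aˣ) (φ : MulAut P) (u : P) : A →ₗ[𝒪] A :=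
  (LinearMap.mulRight 𝒪 ((σ (φ u) : A))).comp
    (LinearMap.mulLeft 𝒪 (((σ u)⁻¹ : Aˣ) : A))

/-- the action of `u ∈ P` on `Ã := A ⊗_𝒪 𝒪Aut(P)` (modelled as `Aut(P) →₀ A`, with `a ⊗ φ`
corresponding to `single φ a`): `(a ⊗ φ)^u = u⁻¹·a·φ(u) ⊗ φ`. -/
noncomputable def tAct (σ : P →* Aˣ) (u : P) :
    (MulAut P →₀ A) →ₗ[𝒪] (MulAut P →₀ A) :=
  Finsupp.lsum 𝒪 fun φ : MulAut P => (Finsupp.lsingle φ).comp (conjMap 𝒪 σ φ u)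

theorem tAct_single (σ : P →* Aˣ) (u : P) (φ : MulAut P) (a : A) :
    tAct 𝒪 σ u (Finsupp.single φ a) =
      Finsupp.single φ ((((σ u)⁻¹ : Aˣ) : A) * a * (σ (φ u) : A)) := by
  simp [tAct, conjMap]

/-- `Ã^{Δ(Q)}`: the `Q`-fixed points of `Ã`. -/
def tFixed (σ : P →* Aˣ) (Q : Subgroup P) : Submodule 𝒪 (MulAut P →₀ A) where
  carrier := {f | ∀ u ∈ Q, tAct 𝒪 σ u f = f}
  add_mem' := by intro f g hf hg u hu; rw [map_add, hf u hu, hg u hu]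
  zero_mem' := by intro u hu; rw [map_zero]
  smul_mem' := by intro c f hf u hu; rw [map_smul, hf u hu]

theorem single_mem_tFixed {σ : P →* Aˣ} {φ : MulAut P} {a : A}
    (ha : a ∈ intFixed 𝒪 σ φ ⊤) : Finsupp.single φ a ∈ tFixed 𝒪 σ ⊤ := by
  intro u _
  rw [tAct_single]
  congr 1
  rw [mul_assoc, ← ha u (Subgroup.mem_top u), ← mul_assoc, Units.inv_mul, one_mul]

/-- the relative trace `Tr_Q^P` on `Ã`. -/
noncomputable def tTr [Finite P] (σ : P →* Aˣ) (Q : Subgroup P) (f : MulAut P →₀ A) :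
    MulAut P →₀ A :=
  ∑ᶠ x : Quotient (QuotientGroup.rightRel Q), tAct 𝒪 σ x.out f

/-- the denominator `Σ_{Q<P} Tr_Q^P(Ã^Q) + 𝔭·Ã^P` of the Brauer quotient of `Ã`. -/
noncomputable def tDen [Finite P] (𝔭 : Ideal 𝒪) (σ : P →* Aˣ) :
    Submodule 𝒪 (MulAut P →₀ A) :=
  (⨆ Q : {Q : Subgroup P // Q < ⊤},
      Submodule.span 𝒪 (tTr 𝒪 σ Q '' (tFixed 𝒪 σ Q))) ⊔ 𝔭 • tFixed 𝒪 σ ⊤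

/-- the Brauer quotient `Ã(P)`. -/
noncomputable abbrev TBrQuot [Finite P] (𝔭 : Ideal 𝒪) (σ : P →* Aˣ) :=
  subQuot (tFixed 𝒪 σ ⊤) (tDen 𝒪 𝔭 σ)

/-- `A ⊗ φ`, the `φ`-component of `Ã`, as a `P`-stable submodule; its `Q`-fixed points are
`A^{Δ_φ(Q)} ⊗ φ`. -/
noncomputable def compFixed (σ : P →* Aˣ) (φ : MulAut P) (Q : Subgroup P) :
    Submodule 𝒪 (MulAut P →₀ A) :=
  Submodule.map (Finsupp.lsingle φ : A →ₗ[𝒪] (MulAut P →₀ A)) (intFixed 𝒪 σ φ Q)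

/-- the denominator of the Brauer quotient `(A ⊗ φ)(P)`. -/
noncomputable def compDen [Finite P] (𝔭 : Ideal 𝒪) (σ : P →* Aˣ) (φ : MulAut P) :
    Submodule 𝒪 (MulAut P →₀ A) :=
  (⨆ Q : {Q : Subgroup P // Q < ⊤},
      Submodule.span 𝒪 (tTr 𝒪 σ Q '' (compFixed 𝒪 σ φ Q))) ⊔ 𝔭 • compFixed 𝒪 σ φ ⊤

/-- the Brauer quotient `(A ⊗ φ)(P)`. -/
noncomputable abbrev CompBrQuot [Finite P] (𝔭 : Ideal 𝒪) (σ : P →* Aˣ) (φ : MulAut P) :=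
  subQuot (compFixed 𝒪 σ φ ⊤) (compDen 𝒪 𝔭 σ φ)

end Common
section Aux
variable (𝒪 : Type*) [CommRing 𝒪]
variable {A : Type*} [Ring A] [Algebra 𝒪 A]
variable {P : Type*} [Group P]
variable (σ : P →* Aˣ)

theorem tAct_apply (u : P) (f : MulAut P →₀ A) (ψ : MulAut P) :
    tAct 𝒪 σ u f ψ = (((σ u)⁻¹ : Aˣ) : A) * f ψ * (σ (ψ u) : A) := by
  induction f using Finsupp.induction_linear with
  | zero => simp
  | add f g hf hg => simp [hf, hg, mul_add, add_mul]
  | single φ a =>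
      rw [tAct_single]
      rcases eq_or_ne φ ψ with h | h
      · subst h; simp
      · simp [Finsupp.single_apply, h]

theorem mem_tFixed_iff {Q : Subgroup P} {f : MulAut P →₀ A} :
    f ∈ tFixed 𝒪 σ Q ↔ ∀ ψ : MulAut P, f ψ ∈ intFixed 𝒪 σ ψ Q := by
  constructor
  · intro hf ψ u hu
    have h := congrArg (fun g : MulAut P →₀ A => g ψ) (hf u hu)
    simp only [tAct_apply] at h
    calc (σ u : A) * f ψ
        = (σ u : A) * ((((σ u)⁻¹ : Aˣ) : A) * f ψ * (σ (ψ u) : A)) := by rw [h]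
      _ = f ψ * (σ (ψ u) : A) := by
          rw [← mul_assoc, ← mul_assoc, Units.mul_inv, one_mul]
  · intro hf u hu
    ext ψ
    rw [tAct_apply, mul_assoc, ← hf ψ u hu, ← mul_assoc, Units.inv_mul, one_mul]

theorem single_mem_tFixed' {φ : MulAut P} {Q : Subgroup P} {a : A}
    (ha : a ∈ intFixed 𝒪 σ φ Q) : Finsupp.single φ a ∈ tFixed 𝒪 σ Q := by
  intro u hu
  rw [tAct_single]
  congr 1
  rw [mul_assoc, ← ha u hu, ← mul_assoc, Units.inv_mul, one_mul]

theorem tTr_apply [Finite P] (Q : Subgroup P) (f : MulAut P →₀ A) (ψ : MulAut P) :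
    tTr 𝒪 σ Q f ψ = relTr σ ψ Q (f ψ) := by
  haveI : Fintype (Quotient (QuotientGroup.rightRel Q)) := Fintype.ofFinite _
  rw [tTr, relTr, finsum_eq_sum_of_fintype, finsum_eq_sum_of_fintype, Finset.sum_apply']
  exact Finset.sum_congr rfl fun x _ => tAct_apply 𝒪 σ x.out f ψ

theorem relTr_zero [Finite P] (φ : P ≃* P) (Q : Subgroup P) : relTr σ φ Q 0 = 0 := by
  simp [relTr]

theorem tTr_single [Finite P] (Q : Subgroup P) (φ : MulAut P) (c : A) :
    tTr 𝒪 σ Q (Finsupp.single φ c) = Finsupp.single φ (relTr σ φ Q c) := by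
  ext ψ
  rw [tTr_apply]
  rcases eq_or_ne φ ψ with h | h
  · subst h; simp
  · simp [Finsupp.single_apply, h, relTr_zero]

end Aux
set_option linter.unusedSectionVars false
section Aux2
variable (𝒪 : Type*) [CommRing 𝒪]
variable {A : Type*} [Ring A] [Algebra 𝒪 A]
variable {P : Type*} [Group P] [Finite P]
variable (σ : P →* Aˣ) (𝔭 : Ideal 𝒪)

theorem map_tFixed_le (Q : Subgroup P) (ψ : MulAut P) :
    Submodule.map (Finsupp.lapply ψ : (MulAut P →₀ A) →ₗ[𝒪] A) (tFixed 𝒪 σ Q)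
      ≤ intFixed 𝒪 σ ψ Q := by
  rintro _ ⟨f, hf, rfl⟩
  exact (mem_tFixed_iff 𝒪 σ).1 hf ψ

theorem map_tDen_le (ψ : MulAut P) :
    Submodule.map (Finsupp.lapply ψ : (MulAut P →₀ A) →ₗ[𝒪] A) (tDen 𝒪 𝔭 σ)
      ≤ brDen 𝒪 𝔭 σ ψ := by
  rw [tDen, Submodule.map_sup, Submodule.map_iSup, brDen]
  apply sup_le_sup
  · apply iSup_mono; intro Q
    rw [Submodule.map_span]
    apply Submodule.span_mono
    rintro _ ⟨_, ⟨f, hf, rfl⟩, rfl⟩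
    exact ⟨f ψ, (mem_tFixed_iff 𝒪 σ).1 hf ψ, (tTr_apply 𝒪 σ Q f ψ).symm⟩
  · rw [Submodule.map_smul'']
    exact Submodule.smul_mono (le_refl 𝔭) (map_tFixed_le 𝒪 σ ⊤ ψ)

theorem mem_intFixed_of_mem_compFixed {φ : MulAut P} {Q : Subgroup P}
    {f : MulAut P →₀ A} (hf : f ∈ compFixed 𝒪 σ φ Q) : f φ ∈ intFixed 𝒪 σ φ Q := by
  obtain ⟨a, ha, rfl⟩ := hf
  simpa using ha

theorem map_compFixed_le (Q : Subgroup P) (φ : MulAut P) :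
    Submodule.map (Finsupp.lapply φ : (MulAut P →₀ A) →ₗ[𝒪] A) (compFixed 𝒪 σ φ Q)
      ≤ intFixed 𝒪 σ φ Q := by
  rintro _ ⟨f, hf, rfl⟩
  exact mem_intFixed_of_mem_compFixed 𝒪 σ hf

theorem map_compDen_le (φ : MulAut P) :
    Submodule.map (Finsupp.lapply φ : (MulAut P →₀ A) →ₗ[𝒪] A) (compDen 𝒪 𝔭 σ φ)
      ≤ brDen 𝒪 𝔭 σ φ := by
  rw [compDen, Submodule.map_sup, Submodule.map_iSup, brDen]
  apply sup_le_sup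
  · apply iSup_mono; intro Q
    rw [Submodule.map_span]
    apply Submodule.span_mono
    rintro _ ⟨_, ⟨f, hf, rfl⟩, rfl⟩
    exact ⟨f φ, mem_intFixed_of_mem_compFixed 𝒪 σ hf, (tTr_apply 𝒪 σ Q f φ).symm⟩
  · rw [Submodule.map_smul'']
    exact Submodule.smul_mono (le_refl 𝔭) (map_compFixed_le 𝒪 σ ⊤ φ)

theorem map_brDen_le_compDen (φ : MulAut P) :
    Submodule.map (Finsupp.lsingle φ : A →ₗ[𝒪] (MulAut P →₀ A)) (brDen 𝒪 𝔭 σ φ)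
      ≤ compDen 𝒪 𝔭 σ φ := by
  rw [brDen, Submodule.map_sup, trSum, Submodule.map_iSup, compDen]
  apply sup_le_sup
  · apply iSup_mono; intro Q
    rw [Submodule.map_span]
    apply Submodule.span_mono
    rintro _ ⟨_, ⟨c, hc, rfl⟩, rfl⟩
    exact ⟨Finsupp.single φ c, ⟨c, hc, rfl⟩, tTr_single 𝒪 σ Q φ c⟩
  · rw [Submodule.map_smul'']
    exact le_rfl

theorem compFixed_le_tFixed (φ : MulAut P) (Q : Subgroup P) :
    compFixed 𝒪 σ φ Q ≤ tFixed 𝒪 σ Q := by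
  rintro _ ⟨a, ha, rfl⟩
  exact single_mem_tFixed' 𝒪 σ ha

theorem map_brDen_le_tDen (φ : MulAut P) :
    Submodule.map (Finsupp.lsingle φ : A →ₗ[𝒪] (MulAut P →₀ A)) (brDen 𝒪 𝔭 σ φ)
      ≤ tDen 𝒪 𝔭 σ := by
  refine le_trans (map_brDen_le_compDen 𝒪 σ 𝔭 φ) ?_
  rw [compDen, tDen]
  apply sup_le_sup
  · apply iSup_mono; intro Q
    exact Submodule.span_mono (Set.image_mono (compFixed_le_tFixed 𝒪 σ φ Q))
  · exact Submodule.smul_mono (le_refl 𝔭) (compFixed_le_tFixed 𝒪 σ φ ⊤)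

end Aux2
set_option maxHeartbeats 1000000
set_option synthInstance.maxHeartbeats 400000
section Aux3
variable (𝒪 : Type*) [CommRing 𝒪]
variable {A : Type*} [Ring A] [Algebra 𝒪 A]
variable {P : Type*} [Group P] [Finite P]
variable (σ : P →* Aˣ) (𝔭 : Ideal 𝒪)

/-- the quotient map onto `A(Δ_φ(P))`. -/
noncomputable def brMk (φ : MulAut P) :
    ↥(intFixed 𝒪 σ φ ⊤) →ₗ[𝒪] BrQuot 𝒪 𝔭 σ φ :=
  Submodule.mkQ _

/-- the quotient map onto `(A ⊗ φ)(P)`. -/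
noncomputable def compMk (φ : MulAut P) :
    ↥(compFixed 𝒪 σ φ ⊤) →ₗ[𝒪] CompBrQuot 𝒪 𝔭 σ φ :=
  Submodule.mkQ _

/-- the quotient map onto `Ã(P)`. -/
noncomputable def tMk : ↥(tFixed 𝒪 σ ⊤) →ₗ[𝒪] TBrQuot 𝒪 𝔭 σ :=
  Submodule.mkQ _

theorem brMk_apply (φ : MulAut P) (a : ↥(intFixed 𝒪 σ φ ⊤)) :
    brMk 𝒪 σ 𝔭 φ a = Submodule.Quotient.mk a := rfl

theorem compMk_apply (φ : MulAut P) (f : ↥(compFixed 𝒪 σ φ ⊤)) :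
    compMk 𝒪 σ 𝔭 φ f = Submodule.Quotient.mk f := rfl

theorem tMk_apply (f : ↥(tFixed 𝒪 σ ⊤)) :
    tMk 𝒪 σ 𝔭 f = Submodule.Quotient.mk f := rfl

theorem brMk_eq_zero (φ : MulAut P) (a : ↥(intFixed 𝒪 σ φ ⊤))
    (h : (a : A) ∈ brDen 𝒪 𝔭 σ φ) : brMk 𝒪 σ 𝔭 φ a = 0 := by
  rw [brMk_apply, Submodule.Quotient.mk_eq_zero]
  exact h

theorem compMk_eq_zero (φ : MulAut P) (f : ↥(compFixed 𝒪 σ φ ⊤))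
    (h : (f : MulAut P →₀ A) ∈ compDen 𝒪 𝔭 σ φ) : compMk 𝒪 σ 𝔭 φ f = 0 := by
  rw [compMk_apply, Submodule.Quotient.mk_eq_zero]
  exact h

theorem tMk_eq_zero (f : ↥(tFixed 𝒪 σ ⊤))
    (h : (f : MulAut P →₀ A) ∈ tDen 𝒪 𝔭 σ) : tMk 𝒪 σ 𝔭 f = 0 := by
  rw [tMk_apply, Submodule.Quotient.mk_eq_zero]
  exact h

/-- restriction of evaluation at `φ` to the fixed points of the `φ`-component. -/
noncomputable def compEv (φ : MulAut P) :
    ↥(compFixed 𝒪 σ φ ⊤) →ₗ[𝒪] ↥(intFixed 𝒪 σ φ ⊤) :=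
  LinearMap.codRestrict (intFixed 𝒪 σ φ ⊤)
    ((Finsupp.lapply φ).comp (compFixed 𝒪 σ φ ⊤).subtype)
    (fun f => mem_intFixed_of_mem_compFixed 𝒪 σ f.2)

/-- `a ↦ a ⊗ φ` as a map into the fixed points of the `φ`-component. -/
noncomputable def compIn (φ : MulAut P) :
    ↥(intFixed 𝒪 σ φ ⊤) →ₗ[𝒪] ↥(compFixed 𝒪 σ φ ⊤) :=
  LinearMap.codRestrict (compFixed 𝒪 σ φ ⊤)
    ((Finsupp.lsingle φ).comp (intFixed 𝒪 σ φ ⊤).subtype)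
    (fun a => Submodule.mem_map.mpr ⟨↑a, a.2, rfl⟩)

/-- `a ⊗ φ ↦ a` induced on Brauer quotients. -/
noncomputable def compToBr (φ : MulAut P) :
    CompBrQuot 𝒪 𝔭 σ φ →ₗ[𝒪] BrQuot 𝒪 𝔭 σ φ :=
  Submodule.liftQ _ ((brMk 𝒪 σ 𝔭 φ).comp (compEv 𝒪 σ φ))
    (by
      intro x hx
      rw [LinearMap.mem_ker, LinearMap.comp_apply]
      exact brMk_eq_zero 𝒪 σ 𝔭 φ _ (map_compDen_le 𝒪 σ 𝔭 φ ⟨↑x, hx, rfl⟩))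

/-- `a ↦ a ⊗ φ` induced on Brauer quotients. -/
noncomputable def brToComp (φ : MulAut P) :
    BrQuot 𝒪 𝔭 σ φ →ₗ[𝒪] CompBrQuot 𝒪 𝔭 σ φ :=
  Submodule.liftQ _ ((compMk 𝒪 σ 𝔭 φ).comp (compIn 𝒪 σ φ))
    (by
      intro x hx
      rw [LinearMap.mem_ker, LinearMap.comp_apply]
      exact compMk_eq_zero 𝒪 σ 𝔭 φ _ (map_brDen_le_compDen 𝒪 σ 𝔭 φ ⟨↑x, hx, rfl⟩))

theorem compToBr_mk (φ : MulAut P) (f : ↥(compFixed 𝒪 σ φ ⊤)) :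
    compToBr 𝒪 σ 𝔭 φ (Submodule.Quotient.mk f) =
      Submodule.Quotient.mk (compEv 𝒪 σ φ f) := rfl

theorem brToComp_mk (φ : MulAut P) (a : ↥(intFixed 𝒪 σ φ ⊤)) :
    brToComp 𝒪 σ 𝔭 φ (Submodule.Quotient.mk a) =
      Submodule.Quotient.mk (compIn 𝒪 σ φ a) := rfl

/-- the isomorphism `(A ⊗ φ)(P) ≅ A(Δ_φ(P))`. -/
noncomputable def compBrEquiv (φ : MulAut P) :
    CompBrQuot 𝒪 𝔭 σ φ ≃ₗ[𝒪] BrQuot 𝒪 𝔭 σ φ :=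
  LinearEquiv.ofLinear (compToBr 𝒪 σ 𝔭 φ) (brToComp 𝒪 σ 𝔭 φ)
    (by
      refine Submodule.linearMap_qext _ ?_
      ext a
      rw [LinearMap.comp_apply, Submodule.mkQ_apply, LinearMap.comp_apply,
        brToComp_mk, compToBr_mk, LinearMap.id_comp, Submodule.mkQ_apply]
      congr 1
      refine Subtype.ext ?_
      show (Finsupp.single φ (a : A)) φ = (a : A)
      simp)
    (by
      refine Submodule.linearMap_qext _ ?_
      ext f
      rw [LinearMap.comp_apply, Submodule.mkQ_apply, LinearMap.comp_apply,
        compToBr_mk, brToComp_mk, LinearMap.id_comp, Submodule.mkQ_apply]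
      congr 1
      refine Subtype.ext ?_
      show Finsupp.single φ ((f : MulAut P →₀ A) φ) = (f : MulAut P →₀ A)
      obtain ⟨a, -, ha⟩ := f.2
      rw [← ha]
      simp)

end Aux3
section Aux4
variable (𝒪 : Type*) [CommRing 𝒪]
variable {A : Type*} [Ring A] [Algebra 𝒪 A]
variable {P : Type*} [Group P] [Finite P]
variable (σ : P →* Aˣ) (𝔭 : Ideal 𝒪)

noncomputable local instance mulAutFintype : Fintype (MulAut P) :=
  Fintype.ofFinite _

/-- restriction of evaluation at `φ` to the fixed points of `Ã`. -/
noncomputable def tEv (φ : MulAut P) :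
    ↥(tFixed 𝒪 σ ⊤) →ₗ[𝒪] ↥(intFixed 𝒪 σ φ ⊤) :=
  LinearMap.codRestrict (intFixed 𝒪 σ φ ⊤)
    ((Finsupp.lapply φ).comp (tFixed 𝒪 σ ⊤).subtype)
    (fun f => (mem_tFixed_iff 𝒪 σ).1 f.2 φ)

/-- `a ↦ a ⊗ φ` as a map into the fixed points of `Ã`. -/
noncomputable def tIn (φ : MulAut P) :
    ↥(intFixed 𝒪 σ φ ⊤) →ₗ[𝒪] ↥(tFixed 𝒪 σ ⊤) :=
  LinearMap.codRestrict (tFixed 𝒪 σ ⊤)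
    ((Finsupp.lsingle φ).comp (intFixed 𝒪 σ φ ⊤).subtype)
    (fun a => single_mem_tFixed' 𝒪 σ a.2)

/-- `Ã^P → ⊕_φ A(Δ_φ(P))`, `f ↦ Σ_φ [f φ]`. -/
noncomputable def tToSum :
    ↥(tFixed 𝒪 σ ⊤) →ₗ[𝒪] ⨁ φ : MulAut P, BrQuot 𝒪 𝔭 σ φ :=
  ∑ φ : MulAut P,
    (DirectSum.lof 𝒪 (MulAut P) (fun φ => BrQuot 𝒪 𝔭 σ φ) φ).comp
      ((brMk 𝒪 σ 𝔭 φ).comp (tEv 𝒪 σ φ))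

theorem tToSum_apply (f : ↥(tFixed 𝒪 σ ⊤)) :
    tToSum 𝒪 σ 𝔭 f =
      ∑ φ : MulAut P, DirectSum.lof 𝒪 (MulAut P) (fun φ => BrQuot 𝒪 𝔭 σ φ) φ
        (brMk 𝒪 σ 𝔭 φ (tEv 𝒪 σ φ f)) := by
  rw [tToSum, LinearMap.sum_apply]
  rfl

theorem tToSum_single (φ : MulAut P) (a : A) (ha : a ∈ intFixed 𝒪 σ φ ⊤) :
    tToSum 𝒪 σ 𝔭 ⟨Finsupp.single φ a, single_mem_tFixed' 𝒪 σ ha⟩ =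
      DirectSum.lof 𝒪 (MulAut P) (fun φ => BrQuot 𝒪 𝔭 σ φ) φ
        (Submodule.Quotient.mk ⟨a, ha⟩) := by
  rw [tToSum_apply]
  rw [Finset.sum_eq_single φ]
  · congr 1
    rw [brMk_apply]
    congr 1
    refine Subtype.ext ?_
    show (Finsupp.single φ a) φ = a
    simp
  · intro ψ _ hψ
    have h0 : tEv 𝒪 σ ψ ⟨Finsupp.single φ a, single_mem_tFixed' 𝒪 σ ha⟩ = 0 := by
      refine Subtype.ext ?_
      show (Finsupp.single φ a) ψ = 0
      exact Finsupp.single_eq_of_ne hψ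
    rw [h0, map_zero, map_zero]
  · intro h
    exact absurd (Finset.mem_univ φ) h

/-- `⊕_φ A(Δ_φ(P)) → Ã(P)`, `[a]_φ ↦ [a ⊗ φ]`. -/
noncomputable def sumToT :
    (⨁ φ : MulAut P, BrQuot 𝒪 𝔭 σ φ) →ₗ[𝒪] TBrQuot 𝒪 𝔭 σ :=
  DirectSum.toModule 𝒪 (MulAut P) _ fun φ =>
    Submodule.liftQ _ ((tMk 𝒪 σ 𝔭).comp (tIn 𝒪 σ φ))
      (by
        intro x hx
        rw [LinearMap.mem_ker, LinearMap.comp_apply]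
        exact tMk_eq_zero 𝒪 σ 𝔭 _ (map_brDen_le_tDen 𝒪 σ 𝔭 φ ⟨↑x, hx, rfl⟩))

theorem sumToT_lof_mk (φ : MulAut P) (a : ↥(intFixed 𝒪 σ φ ⊤)) :
    sumToT 𝒪 σ 𝔭 (DirectSum.lof 𝒪 (MulAut P) (fun φ => BrQuot 𝒪 𝔭 σ φ) φ
        (Submodule.Quotient.mk a)) =
      Submodule.Quotient.mk (tIn 𝒪 σ φ a) := by
  rw [sumToT, DirectSum.toModule_lof]
  rfl

/-- every finitely supported function is the sum of its single components. -/
theorem finsupp_eq_sum_single (f : MulAut P →₀ A) :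
    ∑ φ : MulAut P, Finsupp.single φ (f φ) = f := by
  ext ψ
  rw [Finset.sum_apply']
  simp [Finsupp.single_apply]

noncomputable local instance brQuotAddCommGroup (φ : MulAut P) :
    AddCommGroup (BrQuot 𝒪 𝔭 σ φ) :=
  Submodule.Quotient.addCommGroup _

/-- `Ã(P) → ⊕_φ A(Δ_φ(P))` induced by `tToSum`. -/
noncomputable def tBrToSum :
    TBrQuot 𝒪 𝔭 σ →ₗ[𝒪] ⨁ φ : MulAut P, BrQuot 𝒪 𝔭 σ φ :=
  Submodule.liftQ _ (tToSum 𝒪 σ 𝔭)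
    (by
      intro x hx
      rw [LinearMap.mem_ker, tToSum_apply]
      refine Finset.sum_eq_zero fun ψ _ => ?_
      have h0 : brMk 𝒪 σ 𝔭 ψ (tEv 𝒪 σ ψ x) = 0 :=
        brMk_eq_zero 𝒪 σ 𝔭 ψ _ (map_tDen_le 𝒪 σ 𝔭 ψ ⟨↑x, hx, rfl⟩)
      rw [h0, map_zero])

theorem tBrToSum_mk (f : ↥(tFixed 𝒪 σ ⊤)) :
    tBrToSum 𝒪 σ 𝔭 (Submodule.Quotient.mk f) = tToSum 𝒪 σ 𝔭 f := rfl

/-- the isomorphism `Ã(P) ≅ ⊕_φ A(Δ_φ(P))`. -/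
noncomputable def tBrEquiv :
    TBrQuot 𝒪 𝔭 σ ≃ₗ[𝒪] ⨁ φ : MulAut P, BrQuot 𝒪 𝔭 σ φ :=
  LinearEquiv.ofLinear (tBrToSum 𝒪 σ 𝔭) (sumToT 𝒪 σ 𝔭)
    (by
      refine DirectSum.linearMap_ext _ fun φ => ?_
      refine Submodule.linearMap_qext _ ?_
      refine LinearMap.ext fun a => ?_
      show tBrToSum 𝒪 σ 𝔭 (sumToT 𝒪 σ 𝔭 (DirectSum.lof 𝒪 (MulAut P)
          (fun φ => BrQuot 𝒪 𝔭 σ φ) φ (Submodule.Quotient.mk a))) =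
        DirectSum.lof 𝒪 (MulAut P) (fun φ => BrQuot 𝒪 𝔭 σ φ) φ (Submodule.Quotient.mk a)
      rw [sumToT_lof_mk, tBrToSum_mk]
      exact tToSum_single 𝒪 σ 𝔭 φ ↑a a.2)
    (by
      refine Submodule.linearMap_qext _ ?_
      ext f
      show sumToT 𝒪 σ 𝔭 (tBrToSum 𝒪 σ 𝔭 (Submodule.Quotient.mk f)) =
        Submodule.Quotient.mk f
      rw [tBrToSum_mk, tToSum_apply, map_sum (sumToT 𝒪 σ 𝔭) _ Finset.univ]
      have h1 : ∀ φ : MulAut P,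
          sumToT 𝒪 σ 𝔭 (DirectSum.lof 𝒪 (MulAut P) (fun φ => BrQuot 𝒪 𝔭 σ φ) φ
            (brMk 𝒪 σ 𝔭 φ (tEv 𝒪 σ φ f))) =
          Submodule.Quotient.mk (tIn 𝒪 σ φ (tEv 𝒪 σ φ f)) :=
        fun φ => sumToT_lof_mk 𝒪 σ 𝔭 φ (tEv 𝒪 σ φ f)
      rw [Finset.sum_congr rfl fun φ _ => h1 φ]
      have h2 : ∀ g : ↥(tFixed 𝒪 σ ⊤), Submodule.Quotient.mk g =
          ((tDen 𝒪 𝔭 σ).comap (tFixed 𝒪 σ ⊤).subtype).mkQ g := fun g => rfl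
      rw [Finset.sum_congr rfl fun φ _ => h2 _, ← map_sum, h2 f]
      congr 1
      refine Subtype.ext ?_
      rw [AddSubmonoidClass.coe_finset_sum]
      show ∑ φ : MulAut P, Finsupp.single φ ((f : MulAut P →₀ A) φ) =
        (f : MulAut P →₀ A)
      exact finsupp_eq_sum_single _)
end Aux4

/-- With `Ã := A ⊗_𝒪 𝒪Aut(P)` as above (multiplication
`(a⊗φ)(b⊗ψ) = ab ⊗ ψ∘φ`, `P` acting by `(a⊗φ)^u = u⁻¹·a·φ(u) ⊗ φ`), the assignment
`a ⊗ φ ↦ a` induces for each `φ ∈ Aut(P)` a `k`-module isomorphism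
`(A⊗φ)(P) ≅ A(Δ_φ(P))`, and the direct sum of these maps is an isomorphism
`Ã(P) ≅ N̄_A^{Aut(P)}(P) = ⊕_{φ ∈ Aut(P)} A(Δ_φ(P))` of `Aut(P)`-graded `k`-algebras, where
`Ã(P)` is the usual Brauer quotient of `Ã` with respect to this `P`-action.  (The second
isomorphism is determined by sending the class of the `P`-fixed element `a ⊗ φ` to the class
of `a` placed in the `φ`-component; this prescription on classes of homogeneous elements
encodes compatibility with the `Aut(P)`-gradings and with the multiplications.) -/
theorem stmt4
    (𝒪 : Type*) [CommRing 𝒪] [IsDomain 𝒪] [IsDiscreteValuationRing 𝒪]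
    [IsAdicComplete (IsLocalRing.maximalIdeal 𝒪) 𝒪]
    (p : ℕ) [Fact p.Prime] [CharP (IsLocalRing.ResidueField 𝒪) p]
    (P : Type*) [Group P] [Finite P] (hP : IsPGroup p P)
    (A : Type*) [Ring A] [Algebra 𝒪 A] (σ : P →* Aˣ) :
    -- the componentwise isomorphisms `(A⊗φ)(P) ≅ A(Δ_φ(P))`, induced by `a ⊗ φ ↦ a`:
    (∀ φ : MulAut P,
      ∃ e : CompBrQuot 𝒪 (IsLocalRing.maximalIdeal 𝒪) σ φ ≃ₗ[𝒪]
            BrQuot 𝒪 (IsLocalRing.maximalIdeal 𝒪) σ φ,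
        ∀ (a : A) (ha : a ∈ intFixed 𝒪 σ φ ⊤),
          e (Submodule.Quotient.mk
              ⟨Finsupp.single φ a, Submodule.mem_map.mpr ⟨a, ha, rfl⟩⟩) =
            Submodule.Quotient.mk ⟨a, ha⟩) ∧
    -- their direct sum: an isomorphism `Ã(P) ≅ N̄_A^{Aut(P)}(P)` of `Aut(P)`-graded
    -- `k`-algebras (determined on classes of homogeneous elements):
    ∃ E : TBrQuot 𝒪 (IsLocalRing.maximalIdeal 𝒪) σ ≃ₗ[𝒪]
          ⨁ φ : MulAut P, BrQuot 𝒪 (IsLocalRing.maximalIdeal 𝒪) σ φ,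
      ∀ (φ : MulAut P) (a : A) (ha : a ∈ intFixed 𝒪 σ φ ⊤),
        E (Submodule.Quotient.mk ⟨Finsupp.single φ a, single_mem_tFixed 𝒪 ha⟩) =
          DirectSum.of (fun φ : MulAut P => BrQuot 𝒪 (IsLocalRing.maximalIdeal 𝒪) σ φ) φ
            (Submodule.Quotient.mk ⟨a, ha⟩) := by
  constructor
  · intro φ
    refine ⟨compBrEquiv 𝒪 σ _ φ, fun a ha => ?_⟩
    rw [compBrEquiv, LinearEquiv.ofLinear_apply, compToBr_mk]
    congr 1
    refine Subtype.ext ?_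
    show (Finsupp.single φ a) φ = a
    simp
  · refine ⟨tBrEquiv 𝒪 σ _, fun φ a ha => ?_⟩
    rw [tBrEquiv, LinearEquiv.ofLinear_apply, tBrToSum_mk, ← DirectSum.lof_eq_of 𝒪]
    exact tToSum_single 𝒪 σ _ φ a ha
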